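/- Under the assumptions of the controlled lattice system, for each R₁, R₂ > 0 there exists C₁ = C₁(R₁,R₂,T) > 0 such that for any initial data u_{0,1}, u_{0,2} ∈ ℓ² with norms ≤ R₁ and controls v₁, v₂ ∈ L²(0,T;H) with norms ≤ R₂, the corresponding solutions satisfy ‖u_{v₁} - u_{v₂}‖²_{C([0,T],ℓ²)} ≤ C₁(‖u_{0,1} - u_{0,2}‖² + ‖v₁ - v₂‖²_{L²(0,T;H)}). -/

import Mathlib

open MeasureTheory Set

noncomputable section

/-- `ℓ²(ℤ^N)`: square-summable real sequences indexed by `ℤ^N`. -/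
abbrev ESp (N : ℕ) := lp (fun _ : Fin N → ℤ => ℝ) 2

/-- `H = ℓ²(ℕ)`, a separable Hilbert space. -/
abbrev HSp := lp (fun _ : ℕ => ℝ) 2

/-- The standing assumptions on the controlled reaction-diffusion lattice system
`du/dt = -νAu - f(u) - γu + g(t) + σ(t,u)v(t)` on `ℓ²(ℤ^N)`:
`A` is the bounded nonnegative self-adjoint (negative) discrete Laplacian, `f` is the
monotone, locally Lipschitz Nemytskii drift with `f(0)=0` (from (F1)), `γ ≤ 0`, `ν > 0`,
`g ∈ L²(0,T;ℓ²)` (from (gh)), and `σ(t,u) : H → ℓ²` is the Hilbert–Schmidt diffusion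
operator `σ(t,u)v = Σ_k (h_k(t) + σ_k(u)) v_k`, which under (σ1)-(δ1) and (gh) has
linear growth and is locally Lipschitz in `u`, uniformly in `t ∈ [0,T]`. -/
structure ControlledSetting (N : ℕ) (T : ℝ) where
  ν : ℝ
  γ : ℝ
  A : ESp N →L[ℝ] ESp N
  f : ESp N → ESp N
  g : ℝ → ESp N
  σ : ℝ → ESp N → (HSp →L[ℝ] ESp N)
  hT : 0 < T
  hν : 0 < ν
  hγ : γ ≤ 0
  hA_nonneg : ∀ u : ESp N, 0 ≤ (inner ℝ (A u) u : ℝ)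
  hA_symm : ∀ u v : ESp N, (inner ℝ (A u) v : ℝ) = (inner ℝ u (A v) : ℝ)
  hf0 : f 0 = 0
  hf_mono : ∀ u v : ESp N, 0 ≤ (inner ℝ (f u - f v) (u - v) : ℝ)
  hf_lip : ∀ R > (0:ℝ), ∃ L > (0:ℝ), ∀ u v : ESp N,
    ‖u‖ ≤ R → ‖v‖ ≤ R → ‖f u - f v‖ ≤ L * ‖u - v‖
  hg_meas : AEStronglyMeasurable g (volume.restrict (Icc 0 T))
  hg_int : IntegrableOn (fun t => ‖g t‖ ^ 2) (Icc 0 T)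
  hσ_growth : ∃ C > (0:ℝ), ∀ t ∈ Icc (0:ℝ) T, ∀ u : ESp N, ‖σ t u‖ ≤ C * (1 + ‖u‖)
  hσ_lip : ∀ R > (0:ℝ), ∃ L > (0:ℝ), ∀ t ∈ Icc (0:ℝ) T, ∀ u v : ESp N,
    ‖u‖ ≤ R → ‖v‖ ≤ R → ‖σ t u - σ t v‖ ≤ L * ‖u - v‖
  hσ_meas : ∀ u : ESp N, AEStronglyMeasurable (fun t => σ t u) (volume.restrict (Icc 0 T))

/-- `v` is an admissible control in `L²(0,T;H)`. -/
def IsControl (T : ℝ) (v : ℝ → HSp) : Prop :=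
  AEStronglyMeasurable v (volume.restrict (Icc 0 T)) ∧
    IntegrableOn (fun t => ‖v t‖ ^ 2) (Icc 0 T)

/-- `u ∈ C([0,T],ℓ²)` is a solution of the controlled equation with control `v`
and initial condition `u₀`, in the integral-equation sense. -/
def IsSolution {N : ℕ} {T : ℝ} (S : ControlledSetting N T) (v : ℝ → HSp)
    (u₀ : ESp N) (u : ℝ → ESp N) : Prop :=
  ContinuousOn u (Icc 0 T) ∧
    ∀ t ∈ Icc (0:ℝ) T, u t = u₀ + ∫ s in (0:ℝ)..t,
      (-(S.ν • S.A (u s)) - S.f (u s) - S.γ • u s + S.g s + S.σ s (u s) (v s))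

/-!
Testing the equation against `u` removes the dissipative terms `νAu`, `f(u)` and `γu`, and
Gronwall's inequality then bounds `‖u‖` on `[0, T]` by a constant `ρ` depending only on `R₁`,
`R₂`, `T`. On the ball of radius `ρ` the maps `f` and `σ` are Lipschitz, so `‖u₁ - u₂‖` obeys a
linear integral inequality with coefficient `ν‖A‖ + |γ| + L_f + L_σ‖v₁‖` and forcing
`C(1 + ρ)‖v₁ - v₂‖`; Gronwall once more, followed by Cauchy–Schwarz in time, gives the estimate.
-/

open intervalIntegral Filter Topology
open scoped RealInnerProductSpace

theorem MeasureTheory.IntegrableOn.intervalIntegrable_of_mem_Icc {E : Type*}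
    [NormedAddCommGroup E] {f : ℝ → E} {a b r s : ℝ} (hf : IntegrableOn f (Icc a b))
    (hr : r ∈ Icc a b) (hs : s ∈ Icc a b) : IntervalIntegrable f volume r s :=
  (hf.mono_set (uIcc_subset_Icc hr hs)).intervalIntegrable

theorem intervalIntegral_mono_right_of_nonneg {T r t : ℝ} {f : ℝ → ℝ}
    (hf : IntegrableOn f (Icc 0 T)) (hf0 : ∀ s ∈ Icc 0 T, 0 ≤ f s)
    (hr : r ∈ Icc 0 T) (ht : t ∈ Icc 0 T) (hrt : r ≤ t) :
    ∫ s in (0:ℝ)..r, f s ≤ ∫ s in (0:ℝ)..t, f s :=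
  integral_mono_interval le_rfl hr.1 hrt
    (ae_restrict_of_forall_mem measurableSet_Ioc fun s hs => hf0 s ⟨hs.1.le, hs.2.trans ht.2⟩)
    (hf.intervalIntegrable_of_mem_Icc ⟨le_rfl, hr.1.trans hr.2⟩ ht)

theorem integral_mul_le_mul_integral_of_le_add_integral_mul {T c r t : ℝ} {a φ : ℝ → ℝ}
    (ha : IntegrableOn a (Icc 0 T)) (ha0 : ∀ s ∈ Icc 0 T, 0 ≤ a s)
    (hφ : ContinuousOn φ (Icc 0 T)) (hφ0 : ∀ s ∈ Icc 0 T, 0 ≤ φ s)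
    (h : ∀ t ∈ Icc 0 T, φ t ≤ c + ∫ s in (0:ℝ)..t, a s * φ s)
    (hr : r ∈ Icc 0 T) (ht : t ∈ Icc 0 T) (hrt : r ≤ t) :
    ∫ s in r..t, a s * φ s ≤ (∫ s in r..t, a s) * (c + ∫ s in (0:ℝ)..t, a s * φ s) := by
  have h0 : (0:ℝ) ∈ Icc 0 T := ⟨le_rfl, hr.1.trans hr.2⟩
  have haφ : IntegrableOn (fun s => a s * φ s) (Icc 0 T) := ha.mul_continuousOn hφ isCompact_Icc
  rw [← intervalIntegral.integral_mul_const]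
  refine integral_mono_on hrt (haφ.intervalIntegrable_of_mem_Icc hr ht)
    ((ha.intervalIntegrable_of_mem_Icc hr ht).mul_const _) fun s hs => ?_
  have hs' : s ∈ Icc 0 T := ⟨hr.1.trans hs.1, hs.2.trans ht.2⟩
  refine mul_le_mul_of_nonneg_left ((h s hs').trans ?_) (ha0 s hs')
  exact add_le_add_right (intervalIntegral_mono_right_of_nonneg haφ
    (fun s hs => mul_nonneg (ha0 s hs) (hφ0 s hs)) hs' ht hs.2) c

/-- Along an interval `[r, t]` with `∫ᵣᵗ a ≤ 1/2` the bound `c + ∫₀ᵗ a φ` at most doubles, by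
`integral_mul_le_mul_integral_of_le_add_integral_mul`. -/
theorem add_integral_mul_le_two_pow_mul {T c : ℝ} {a φ : ℝ → ℝ}
    (ha : IntegrableOn a (Icc 0 T)) (ha0 : ∀ s ∈ Icc 0 T, 0 ≤ a s)
    (hφ : ContinuousOn φ (Icc 0 T)) (hφ0 : ∀ s ∈ Icc 0 T, 0 ≤ φ s)
    (h : ∀ t ∈ Icc 0 T, φ t ≤ c + ∫ s in (0:ℝ)..t, a s * φ s) (j : ℕ) :
    ∀ t ∈ Icc 0 T, ∫ s in (0:ℝ)..t, a s ≤ j / 2 →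
      c + ∫ s in (0:ℝ)..t, a s * φ s ≤ 2 ^ j * c := by
  have hΨ0 : ∀ t ∈ Icc 0 T, 0 ≤ c + ∫ s in (0:ℝ)..t, a s * φ s :=
    fun t ht => (hφ0 t ht).trans (h t ht)
  induction j with
  | zero =>
    intro t ht hAt
    have := integral_mul_le_mul_integral_of_le_add_integral_mul ha ha0 hφ hφ0 h
      ⟨le_rfl, ht.1.trans ht.2⟩ ht ht.1
    simp only [CharP.cast_eq_zero, zero_div] at hAt
    nlinarith [hΨ0 t ht]
  | succ j ih =>
    intro t ht hAt
    have h0 : (0:ℝ) ∈ Icc 0 T := ⟨le_rfl, ht.1.trans ht.2⟩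
    set A : ℝ → ℝ := fun r => ∫ s in (0:ℝ)..r, a s
    have hA_cont : ContinuousOn A (Icc 0 t) := by
      have := continuousOn_primitive_interval (a := 0) (b := t)
        (ha.mono_set (by rw [uIcc_of_le ht.1]; exact Icc_subset_Icc_right ht.2))
      rwa [uIcc_of_le ht.1] at this
    have hmin : min (j / 2 : ℝ) (A t) ∈ Icc (A 0) (A t) := by
      refine ⟨?_, min_le_right _ _⟩
      simpa [A] using le_min (by positivity)
        (integral_nonneg ht.1 fun s hs => ha0 s ⟨hs.1, hs.2.trans ht.2⟩)
    obtain ⟨r, hr, hAr⟩ := intermediate_value_Icc ht.1 hA_cont hmin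
    have hrT : r ∈ Icc 0 T := ⟨hr.1, hr.2.trans ht.2⟩
    have hgap : ∫ s in r..t, a s ≤ 1 / 2 := by
      rw [← integral_interval_sub_left (ha.intervalIntegrable_of_mem_Icc h0 ht)
        (ha.intervalIntegrable_of_mem_Icc h0 hrT)]
      change A t - A r ≤ 1 / 2
      rw [hAr]; push_cast at hAt
      rcases min_cases (j / 2 : ℝ) (A t) with ⟨hm, -⟩ | ⟨hm, -⟩ <;> rw [hm] <;> linarith
    have hsplit := integral_add_adjacent_intervals
      ((ha.mul_continuousOn hφ isCompact_Icc).intervalIntegrable_of_mem_Icc h0 hrT)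
      ((ha.mul_continuousOn hφ isCompact_Icc).intervalIntegrable_of_mem_Icc hrT ht)
    have hstep := integral_mul_le_mul_integral_of_le_add_integral_mul ha ha0 hφ hφ0 h hrT ht hr.2
    have hΨr := ih r hrT (show A r ≤ j / 2 from hAr ▸ min_le_left _ _)
    rw [pow_succ]
    nlinarith [hΨ0 t ht]

/-- Gronwall's inequality in integral form, with `exp (∫ a)` replaced by `2 ^ ⌈2 ∫ a⌉`. -/
theorem le_two_pow_mul_of_le_add_integral_mul {T c M : ℝ} {a φ : ℝ → ℝ}
    (ha : IntegrableOn a (Icc 0 T)) (ha0 : ∀ s ∈ Icc 0 T, 0 ≤ a s)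
    (hφ : ContinuousOn φ (Icc 0 T)) (hφ0 : ∀ s ∈ Icc 0 T, 0 ≤ φ s)
    (h : ∀ t ∈ Icc 0 T, φ t ≤ c + ∫ s in (0:ℝ)..t, a s * φ s)
    (hM : ∫ s in (0:ℝ)..T, a s ≤ M) :
    ∀ t ∈ Icc 0 T, φ t ≤ 2 ^ ⌈2 * M⌉₊ * c := by
  intro t ht
  have hAt : ∫ s in (0:ℝ)..t, a s ≤ (⌈2 * M⌉₊ : ℝ) / 2 := by
    have := intervalIntegral_mono_right_of_nonneg ha ha0 ht ⟨ht.1.trans ht.2, le_rfl⟩ ht.2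
    linarith [Nat.le_ceil (2 * M)]
  exact (h t ht).trans (add_integral_mul_le_two_pow_mul ha ha0 hφ hφ0 h _ t ht hAt)

theorem norm_le_two_pow_mul_of_norm_integrand_le {E : Type*} [NormedAddCommGroup E]
    [NormedSpace ℝ E] {T M : ℝ} {w G : ℝ → E} {a b : ℝ → ℝ}
    (hw : ContinuousOn w (Icc 0 T)) (heq : ∀ t ∈ Icc 0 T, w t = w 0 + ∫ s in (0:ℝ)..t, G s)
    (ha : IntegrableOn a (Icc 0 T)) (ha0 : ∀ s ∈ Icc 0 T, 0 ≤ a s)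
    (hb : IntegrableOn b (Icc 0 T)) (hb0 : ∀ s ∈ Icc 0 T, 0 ≤ b s)
    (hG : ∀ s ∈ Icc 0 T, ‖G s‖ ≤ a s * ‖w s‖ + b s) (hM : ∫ s in (0:ℝ)..T, a s ≤ M) :
    ∀ t ∈ Icc 0 T, ‖w t‖ ≤ 2 ^ ⌈2 * M⌉₊ * (‖w 0‖ + ∫ s in (0:ℝ)..T, b s) := by
  have haw : IntegrableOn (fun s => a s * ‖w s‖) (Icc 0 T) :=
    ha.mul_continuousOn hw.norm isCompact_Icc
  refine le_two_pow_mul_of_le_add_integral_mul ha ha0 hw.norm (fun _ _ => norm_nonneg _)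
    (fun t ht => ?_) hM
  have h0 : (0:ℝ) ∈ Icc 0 T := ⟨le_rfl, ht.1.trans ht.2⟩
  have hint : ‖∫ s in (0:ℝ)..t, G s‖ ≤ ∫ s in (0:ℝ)..t, (a s * ‖w s‖ + b s) :=
    norm_integral_le_of_norm_le ht.1
      (ae_of_all _ fun s hs => hG s ⟨hs.1.le, hs.2.trans ht.2⟩)
      ((haw.add hb).intervalIntegrable_of_mem_Icc h0 ht)
  rw [intervalIntegral.integral_add (haw.intervalIntegrable_of_mem_Icc h0 ht)
    (hb.intervalIntegrable_of_mem_Icc h0 ht)] at hint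
  have hbT := intervalIntegral_mono_right_of_nonneg hb hb0 ht ⟨ht.1.trans ht.2, le_rfl⟩ ht.2
  calc ‖w t‖ ≤ ‖w 0‖ + ‖∫ s in (0:ℝ)..t, G s‖ := by rw [heq t ht]; exact norm_add_le _ _
    _ ≤ _ := by linarith

theorem sq_intervalIntegral_le_mul_intervalIntegral_sq {a b : ℝ} (hab : a ≤ b) {h : ℝ → ℝ}
    (hh : IntervalIntegrable h volume a b)
    (hh2 : IntervalIntegrable (fun x => h x ^ 2) volume a b) :
    (∫ x in a..b, h x) ^ 2 ≤ (b - a) * ∫ x in a..b, h x ^ 2 := by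
  have hquad : ∀ l : ℝ, 0 ≤ (b - a) * (l * l) + (-2 * ∫ x in a..b, h x) * l
      + ∫ x in a..b, h x ^ 2 := by
    intro l
    have hsq : 0 ≤ ∫ x in a..b, (h x ^ 2 - 2 * l * h x + l ^ 2) :=
      integral_nonneg hab fun x _ => by nlinarith [sq_nonneg (h x - l)]
    rw [integral_add (hh2.sub (hh.const_mul _)) intervalIntegrable_const,
      integral_sub hh2 (hh.const_mul _), intervalIntegral.integral_const_mul,
      intervalIntegral.integral_const, smul_eq_mul] at hsq
    linarith
  have := discrim_le_zero hquad
  rw [discrim] at this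
  linarith

section InnerProduct

variable {E : Type*} [NormedAddCommGroup E] [InnerProductSpace ℝ E]

theorem sq_norm_sub_sq_norm_le_two_inner (x y : E) : ‖x‖ ^ 2 - ‖y‖ ^ 2 ≤ 2 * ⟪x - y, x⟫ := by
  rw [inner_sub_left, real_inner_self_eq_norm_sq]
  nlinarith [norm_sub_sq_real x y, sq_nonneg ‖x - y‖, real_inner_comm x y]

theorem MeasureTheory.IntegrableOn.inner_continuousOn {μ : Measure ℝ} {K : Set ℝ}
    {F u : ℝ → E} (hF : IntegrableOn F K μ) (hu : ContinuousOn u K) (hK : IsCompact K) :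
    IntegrableOn (fun s => ⟪F s, u s⟫) K μ := by
  obtain ⟨C, hC⟩ := hK.exists_bound_of_continuousOn hu
  refine (hF.norm.mul_const C).mono'
    (hF.aestronglyMeasurable.inner (hu.aestronglyMeasurable hK.measurableSet))
    (ae_restrict_of_forall_mem hK.measurableSet fun s hs => ?_)
  exact (norm_inner_le_norm _ _).trans (mul_le_mul_of_nonneg_left (hC s hs) (norm_nonneg _))

variable [CompleteSpace E]

theorem sq_norm_sub_sq_norm_le_integral_inner {u F : ℝ → E} {p q ε : ℝ} (hpq : p ≤ q)
    (hF : IntervalIntegrable F volume p q)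
    (hFu : IntervalIntegrable (fun s => ⟪F s, u s⟫) volume p q)
    (hu : u q - u p = ∫ s in p..q, F s) (hclose : ∀ s ∈ Icc p q, ‖u q - u s‖ ≤ ε) :
    ‖u q‖ ^ 2 - ‖u p‖ ^ 2 ≤ 2 * ∫ s in p..q, (⟪F s, u s⟫ + ε * ‖F s‖) := by
  have hinner : ⟪u q - u p, u q⟫ = ∫ s in p..q, ⟪F s, u q⟫ := by
    have := (innerSL ℝ (u q)).intervalIntegral_comp_comm hF
    simp only [innerSL_apply_apply] at this
    rw [hu, real_inner_comm, ← this]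
    exact integral_congr fun s _ => real_inner_comm _ _
  have hle : ∫ s in p..q, ⟪F s, u q⟫ ≤ ∫ s in p..q, (⟪F s, u s⟫ + ε * ‖F s‖) := by
    refine integral_mono_on hpq ?_ (hFu.add (hF.norm.const_mul ε)) fun s hs => ?_
    · exact ⟨hF.1.inner_const (u q), hF.2.inner_const (u q)⟩
    · have := real_inner_le_norm (F s) (u q - u s)
      rw [inner_sub_right] at this
      nlinarith [hclose s hs, norm_nonneg (F s)]
  linarith [sq_norm_sub_sq_norm_le_two_inner (u q) (u p)]

theorem eventually_sq_norm_sub_integral_le {T ε x : ℝ} {u F : ℝ → E} (hε : 0 < ε)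
    (hu : ContinuousOn u (Icc 0 T)) (hF : IntegrableOn F (Icc 0 T))
    (heq : ∀ t ∈ Icc 0 T, u t = u 0 + ∫ s in (0:ℝ)..t, F s) (hx : x ∈ Ico 0 T) :
    ∀ᶠ z in 𝓝[>] x,
      ‖u z‖ ^ 2 - 2 * ∫ s in (0:ℝ)..z, (⟪F s, u s⟫ + ε * ‖F s‖) ≤
        ‖u x‖ ^ 2 - 2 * ∫ s in (0:ℝ)..x, (⟪F s, u s⟫ + ε * ‖F s‖) := by
  have hxT : x ∈ Icc 0 T := Ico_subset_Icc_self hx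
  have h0 : (0:ℝ) ∈ Icc 0 T := ⟨le_rfl, hx.1.trans hx.2.le⟩
  have hFu := hF.inner_continuousOn hu isCompact_Icc
  have hG : IntegrableOn (fun s => ⟪F s, u s⟫ + ε * ‖F s‖) (Icc 0 T) :=
    hFu.add (hF.norm.const_mul ε)
  obtain ⟨δ, hδ, hδu⟩ := Metric.continuousWithinAt_iff.1 (hu x hxT) (ε / 2) (half_pos hε)
  filter_upwards [Ioo_mem_nhdsGT (lt_min hx.2 (lt_add_of_pos_right x hδ))] with z hz
  have hzT : z ∈ Icc 0 T := ⟨hx.1.trans hz.1.le, hz.2.le.trans (min_le_left _ _)⟩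
  have hnear : ∀ s ∈ Icc x z, ‖u s - u x‖ < ε / 2 := fun s hs => by
    rw [← dist_eq_norm]
    refine hδu ⟨hx.1.trans hs.1, hs.2.trans hzT.2⟩ ?_
    rw [Real.dist_eq, abs_of_nonneg (sub_nonneg.2 hs.1)]
    linarith [hs.2, hz.2.trans_le (min_le_right _ _)]
  have hclose : ∀ s ∈ Icc x z, ‖u z - u s‖ ≤ ε := fun s hs => by
    have := norm_sub_le_norm_sub_add_norm_sub (u z) (u x) (u s)
    rw [norm_sub_rev (u x)] at this
    linarith [hnear z ⟨hz.1.le, le_rfl⟩, hnear s hs]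
  have hincr : u z - u x = ∫ s in x..z, F s := by
    rw [heq z hzT, heq x hxT, add_sub_add_left_eq_sub, integral_interval_sub_left
      (hF.intervalIntegrable_of_mem_Icc h0 hzT) (hF.intervalIntegrable_of_mem_Icc h0 hxT)]
  have hlocal := sq_norm_sub_sq_norm_le_integral_inner hz.1.le
    (hF.intervalIntegrable_of_mem_Icc hxT hzT) (hFu.intervalIntegrable_of_mem_Icc hxT hzT)
    hincr hclose
  have hsplit := integral_add_adjacent_intervals (hG.intervalIntegrable_of_mem_Icc h0 hxT)
    (hG.intervalIntegrable_of_mem_Icc hxT hzT)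
  linarith

/-- The energy inequality, a substitute for `d‖u‖² = 2⟪F, u⟫ dt` that needs no
differentiability: by `eventually_sq_norm_sub_integral_le`, `‖u‖² - 2∫ (⟪F, u⟫ + ε‖F‖)` is
nonincreasing for every `ε > 0`. -/
theorem sq_norm_le_add_integral_inner {T : ℝ} {u F : ℝ → E} (hu : ContinuousOn u (Icc 0 T))
    (hF : IntegrableOn F (Icc 0 T)) (heq : ∀ t ∈ Icc 0 T, u t = u 0 + ∫ s in (0:ℝ)..t, F s) :
    ∀ t ∈ Icc 0 T, ‖u t‖ ^ 2 ≤ ‖u 0‖ ^ 2 + 2 * ∫ s in (0:ℝ)..t, ⟪F s, u s⟫ := by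
  intro t ht
  have h0 : (0:ℝ) ∈ Icc 0 T := ⟨le_rfl, ht.1.trans ht.2⟩
  have hsub : Icc 0 t ⊆ Icc 0 T := Icc_subset_Icc_right ht.2
  have hFu := hF.inner_continuousOn hu isCompact_Icc
  set I := ∫ s in (0:ℝ)..t, ‖F s‖
  set B := ‖u 0‖ ^ 2 + 2 * ∫ s in (0:ℝ)..t, ⟪F s, u s⟫
  suffices hε : ∀ ε > 0, ‖u t‖ ^ 2 ≤ B + 2 * ε * I by
    have hlim : Tendsto (fun ε : ℝ => B + 2 * ε * I) (𝓝[>] 0) (𝓝 B) := by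
      have : Continuous fun ε : ℝ => B + 2 * ε * I := by fun_prop
      simpa using this.tendsto' 0 _ (by simp) |>.mono_left nhdsWithin_le_nhds
    exact ge_of_tendsto hlim (eventually_nhdsWithin_of_forall hε)
  intro ε hε
  set Φ : ℝ → ℝ := fun r => ‖u r‖ ^ 2 - 2 * ∫ s in (0:ℝ)..r, (⟪F s, u s⟫ + ε * ‖F s‖)
  have hΦ : ContinuousOn Φ (Icc 0 t) := by
    have hprim := continuousOn_primitive_interval (a := 0) (b := t)
      ((hFu.add (hF.norm.const_mul ε)).mono_set (by rw [uIcc_of_le ht.1]; exact hsub))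
    rw [uIcc_of_le ht.1] at hprim
    exact ((hu.mono hsub).norm.pow 2).sub (hprim.const_smul (2:ℝ))
  have hclosed : IsClosed ({r | Φ r ≤ Φ 0} ∩ Icc 0 t) := by
    rw [inter_comm]; exact hΦ.preimage_isClosed_of_isClosed isClosed_Icc isClosed_Iic
  have hΦt : Φ t ≤ Φ 0 := by
    refine hclosed.Icc_subset_of_forall_exists_gt (le_refl (Φ 0)) (fun x hx y hy => ?_)
      ⟨ht.1, le_rfl⟩
    obtain ⟨z, hz, hzy⟩ := ((eventually_sq_norm_sub_integral_le hε hu hF heq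
      ⟨hx.2.1, hx.2.2.trans_le ht.2⟩).and (Ioc_mem_nhdsGT hy)).exists
    exact ⟨z, hz.trans hx.1, hzy⟩
  simp only [Φ, integral_same] at hΦt
  rw [intervalIntegral.integral_add (hFu.intervalIntegrable_of_mem_Icc h0 ht)
    ((IntegrableOn.intervalIntegrable_of_mem_Icc hF.norm h0 ht).const_mul ε),
    intervalIntegral.integral_const_mul] at hΦt
  linarith

end InnerProduct

theorem Continuous.of_forall_norm_sub_le_mul {E F : Type*} [SeminormedAddCommGroup E]
    [SeminormedAddCommGroup F] {f : E → F}
    (h : ∀ R > (0:ℝ), ∃ L, ∀ u v : E, ‖u‖ ≤ R → ‖v‖ ≤ R → ‖f u - f v‖ ≤ L * ‖u - v‖) :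
    Continuous f := by
  refine continuous_iff_continuousAt.2 fun x => ?_
  obtain ⟨L, hL⟩ := h (‖x‖ + 1) (by positivity)
  have hlip : LipschitzOnWith (Real.toNNReal L) f (Metric.closedBall 0 (‖x‖ + 1)) :=
    LipschitzOnWith.of_dist_le' fun u hu v hv => by
      simpa [dist_eq_norm] using hL u v (by simpa using hu) (by simpa using hv)
  exact hlip.continuousOn.continuousAt (Metric.closedBall_mem_nhds_of_mem (by simp))

theorem MeasureTheory.AEStronglyMeasurable.apply_of_continuous {α X Y : Type*}
    [MeasurableSpace α] {μ : Measure α} [TopologicalSpace X] [TopologicalSpace Y]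
    [TopologicalSpace.PseudoMetrizableSpace Y] [AddCommMonoid Y] [ContinuousAdd Y] {f : α → X → Y}
    (hf : ∀ x, AEStronglyMeasurable (f · x) μ) (hfc : ∀ᵐ t ∂μ, Continuous (f t)) {w : α → X}
    (hw : AEStronglyMeasurable w μ) : AEStronglyMeasurable (fun t => f t (w t)) μ := by
  set w' := hw.mk w
  have hw' : StronglyMeasurable w' := hw.stronglyMeasurable_mk
  have hsimple : ∀ n, AEStronglyMeasurable (fun t => f t (hw'.approx n t)) μ := by
    intro n
    have hsum : (fun t => f t (hw'.approx n t)) = fun t =>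
        ∑ c ∈ (hw'.approx n).range, ((hw'.approx n) ⁻¹' {c}).indicator (f · c) t := by
      funext t
      rw [Finset.sum_eq_single_of_mem _ ((hw'.approx n).mem_range_self t)
        fun c _ hc => indicator_of_notMem (fun h => hc h.symm) _]
      exact (indicator_of_mem rfl _).symm
    rw [hsum]
    exact Finset.aestronglyMeasurable_fun_sum _
      fun c _ => (hf c).indicator ((hw'.approx n).measurableSet_fiber c)
  refine (aestronglyMeasurable_of_tendsto_ae (g := fun t => f t (w' t)) atTop hsimple ?_).congr ?_
  · filter_upwards [hfc] with t ht
    exact (ht.tendsto _).comp (hw'.tendsto_approx t)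
  · filter_upwards [hw.ae_eq_mk] with t ht
    rw [ht]

section Controls

variable {T : ℝ} {v v₁ v₂ : ℝ → HSp}

theorem IsControl.memLp (hv : IsControl T v) : MemLp v 2 (volume.restrict (Icc 0 T)) :=
  (memLp_two_iff_integrable_sq_norm hv.1).2 hv.2

theorem IsControl.integrableOn (hv : IsControl T v) : IntegrableOn v (Icc 0 T) :=
  hv.memLp.integrable one_le_two

theorem IsControl.sub (hv₁ : IsControl T v₁) (hv₂ : IsControl T v₂) :
    IsControl T fun t => v₁ t - v₂ t :=
  ⟨hv₁.1.sub hv₂.1,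
    (memLp_two_iff_integrable_sq_norm (hv₁.1.sub hv₂.1)).1 (hv₁.memLp.sub hv₂.memLp)⟩

theorem IsControl.integral_norm_le (hv : IsControl T v) (hT : 0 ≤ T) :
    ∫ t in (0:ℝ)..T, ‖v t‖ ≤ T + ∫ t in (0:ℝ)..T, ‖v t‖ ^ 2 := by
  have h0 : (0:ℝ) ∈ Icc 0 T := ⟨le_rfl, hT⟩
  have hTT : T ∈ Icc 0 T := ⟨hT, le_rfl⟩
  have hv2 := hv.2.intervalIntegrable_of_mem_Icc h0 hTT
  have hle := integral_mono_on (g := fun t => 1 + ‖v t‖ ^ 2) hT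
    (IntegrableOn.intervalIntegrable_of_mem_Icc hv.integrableOn.norm h0 hTT)
    (intervalIntegrable_const.add hv2) fun t _ => by nlinarith [sq_nonneg (‖v t‖ - 1)]
  have hsum : ∫ t in (0:ℝ)..T, (1 + ‖v t‖ ^ 2) = T + ∫ t in (0:ℝ)..T, ‖v t‖ ^ 2 := by
    simp [intervalIntegral.integral_add intervalIntegrable_const hv2]
  linarith

end Controls

namespace ControlledSetting

variable {N : ℕ} {T : ℝ} (S : ControlledSetting N T)

def rhs (s : ℝ) (x : ESp N) (w : HSp) : ESp N :=
  -(S.ν • S.A x) - S.f x - S.γ • x + S.g s + S.σ s x w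

end ControlledSetting

section Solutions

variable {N : ℕ} {T : ℝ} {S : ControlledSetting N T} {v : ℝ → HSp} {u₀ : ESp N} {u : ℝ → ESp N}

theorem IsSolution.apply_zero (hsol : IsSolution S v u₀ u) : u 0 = u₀ := by
  simpa using hsol.2 0 ⟨le_rfl, S.hT.le⟩

theorem IsSolution.eq_add_integral (hsol : IsSolution S v u₀ u) :
    ∀ t ∈ Icc 0 T, u t = u 0 + ∫ s in (0:ℝ)..t, S.rhs s (u s) (v s) := by
  rw [hsol.apply_zero]
  exact hsol.2

end Solutions

namespace ControlledSetting

variable {N : ℕ} {T : ℝ} (S : ControlledSetting N T)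

theorem continuous_f : Continuous S.f :=
  Continuous.of_forall_norm_sub_le_mul fun R hR => (S.hf_lip R hR).imp fun _ hL => hL.2

theorem continuous_σ {t : ℝ} (ht : t ∈ Icc 0 T) : Continuous (S.σ t) :=
  Continuous.of_forall_norm_sub_le_mul fun R hR =>
    (S.hσ_lip R hR).imp fun _ hL u v => hL.2 t ht u v

theorem integrableOn_g : IntegrableOn S.g (Icc 0 T) :=
  ((memLp_two_iff_integrable_sq_norm S.hg_meas).2 S.hg_int).integrable one_le_two

theorem integrableOn_rhs {v : ℝ → HSp} {u : ℝ → ESp N} (hu : ContinuousOn u (Icc 0 T))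
    (hv : IsControl T v) : IntegrableOn (fun s => S.rhs s (u s) (v s)) (Icc 0 T) := by
  have hdrift : ContinuousOn (fun s => -(S.ν • S.A (u s)) - S.f (u s) - S.γ • u s) (Icc 0 T) :=
    (((S.A.continuous.comp_continuousOn hu).const_smul S.ν).neg.sub
      (S.continuous_f.comp_continuousOn hu)).sub (hu.const_smul S.γ)
  have hσu : AEStronglyMeasurable (fun s => S.σ s (u s)) (volume.restrict (Icc 0 T)) :=
    AEStronglyMeasurable.apply_of_continuous S.hσ_meas
      (ae_restrict_of_forall_mem measurableSet_Icc fun _ ht => S.continuous_σ ht)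
      (hu.aestronglyMeasurable measurableSet_Icc)
  obtain ⟨C, hC, hgrow⟩ := S.hσ_growth
  obtain ⟨K, hK⟩ := isCompact_Icc.exists_bound_of_continuousOn hu
  have hσuv : IntegrableOn (fun s => S.σ s (u s) (v s)) (Icc 0 T) := by
    refine (hv.integrableOn.norm.const_mul (C * (1 + K))).mono'
      (isBoundedBilinearMap_apply.continuous.comp_aestronglyMeasurable (hσu.prodMk hv.1))
      (ae_restrict_of_forall_mem measurableSet_Icc fun s hs => ?_)
    calc ‖S.σ s (u s) (v s)‖ ≤ ‖S.σ s (u s)‖ * ‖v s‖ := (S.σ s (u s)).le_opNorm _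
      _ ≤ C * (1 + K) * ‖v s‖ := by gcongr; exact (hgrow s hs _).trans (by gcongr; exact hK s hs)
  exact (hdrift.integrableOn_Icc.add S.integrableOn_g).add hσuv

/-- `A ≥ 0`, the monotonicity of `f` with `f 0 = 0`, and `γ ≤ 0` make the first three terms of
`rhs` dissipative. -/
theorem two_inner_rhs_le {s C : ℝ} {x : ESp N} {w : HSp} (hC : 0 ≤ C)
    (hσ : ‖S.σ s x‖ ≤ C * (1 + ‖x‖)) :
    2 * ⟪S.rhs s x w, x⟫ ≤
      (2 * |S.γ| + 1 + 2 * C + ‖S.g s‖ ^ 2 + 2 * C * ‖w‖ ^ 2) * (1 + ‖x‖ ^ 2) := by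
  have hA : 0 ≤ S.ν * ⟪S.A x, x⟫ := mul_nonneg S.hν.le (S.hA_nonneg x)
  have hf : 0 ≤ ⟪S.f x, x⟫ := by simpa [S.hf0] using S.hf_mono x 0
  have hg : ⟪S.g s, x⟫ ≤ ‖S.g s‖ * ‖x‖ := real_inner_le_norm _ _
  have hσw : ⟪S.σ s x w, x⟫ ≤ C * (1 + ‖x‖) * ‖w‖ * ‖x‖ :=
    (real_inner_le_norm _ _).trans <| by
      gcongr; exact ((S.σ s x).le_opNorm w).trans (by gcongr)
  have hexpand : ⟪S.rhs s x w, x⟫ = -(S.ν * ⟪S.A x, x⟫) - ⟪S.f x, x⟫ - S.γ * ‖x‖ ^ 2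
      + ⟪S.g s, x⟫ + ⟪S.σ s x w, x⟫ := by
    simp only [rhs, inner_add_left, inner_sub_left, inner_neg_left, real_inner_smul_left,
      real_inner_self_eq_norm_sq]
  have hγ : -S.γ = |S.γ| := (abs_of_nonpos S.hγ).symm
  have hxw : 2 * ((1 + ‖x‖) * ‖w‖ * ‖x‖) ≤ 2 * ((1 + ‖w‖ ^ 2) * (1 + ‖x‖ ^ 2)) := by
    nlinarith [sq_nonneg (‖w‖ - 1), sq_nonneg (‖x‖ - 1), norm_nonneg w, norm_nonneg x,
      mul_nonneg (norm_nonneg w) (norm_nonneg x), mul_nonneg (sq_nonneg (‖w‖ - 1)) (sq_nonneg ‖x‖)]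
  nlinarith [sq_nonneg (‖S.g s‖ - ‖x‖), sq_nonneg (‖S.g s‖ * ‖x‖), abs_nonneg S.γ,
    mul_nonneg (abs_nonneg S.γ) (sq_nonneg ‖x‖), mul_le_mul_of_nonneg_left hxw hC]

theorem norm_rhs_sub_rhs_le {s Lf Lσ K : ℝ} {x y : ESp N} {w w' : HSp}
    (hf : ‖S.f x - S.f y‖ ≤ Lf * ‖x - y‖) (hσ : ‖S.σ s x - S.σ s y‖ ≤ Lσ * ‖x - y‖)
    (hK : ‖S.σ s y‖ ≤ K) :
    ‖S.rhs s x w - S.rhs s y w'‖ ≤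
      (S.ν * ‖S.A‖ + |S.γ| + Lf + Lσ * ‖w‖) * ‖x - y‖ + K * ‖w - w'‖ := by
  have hsplit : S.rhs s x w - S.rhs s y w' = -(S.ν • S.A (x - y)) - (S.f x - S.f y)
      - S.γ • (x - y) + (S.σ s x - S.σ s y) w + S.σ s y (w - w') := by
    simp only [rhs, map_sub, sub_apply, smul_sub]
    abel
  have hA : ‖S.ν • S.A (x - y)‖ ≤ S.ν * ‖S.A‖ * ‖x - y‖ := by
    rw [norm_smul, Real.norm_of_nonneg S.hν.le, mul_assoc]
    exact mul_le_mul_of_nonneg_left (S.A.le_opNorm _) S.hν.le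
  have hγ : ‖S.γ • (x - y)‖ = |S.γ| * ‖x - y‖ := by rw [norm_smul, Real.norm_eq_abs]
  have hσw : ‖(S.σ s x - S.σ s y) w‖ ≤ Lσ * ‖x - y‖ * ‖w‖ :=
    ((S.σ s x - S.σ s y).le_opNorm w).trans (by gcongr)
  have hσw' : ‖S.σ s y (w - w')‖ ≤ K * ‖w - w'‖ :=
    ((S.σ s y).le_opNorm _).trans (by gcongr)
  rw [hsplit]
  have h1 := norm_add_le (-(S.ν • S.A (x - y)) - (S.f x - S.f y) - S.γ • (x - y)
    + (S.σ s x - S.σ s y) w) (S.σ s y (w - w'))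
  have h2 := norm_add_le (-(S.ν • S.A (x - y)) - (S.f x - S.f y) - S.γ • (x - y))
    ((S.σ s x - S.σ s y) w)
  have h3 := norm_sub_le (-(S.ν • S.A (x - y)) - (S.f x - S.f y)) (S.γ • (x - y))
  have h4 := norm_sub_le (-(S.ν • S.A (x - y))) (S.f x - S.f y)
  rw [norm_neg] at h4
  nlinarith [norm_nonneg (x - y), norm_nonneg w]

theorem exists_norm_le_of_isSolution (R₁ R₂ : ℝ) :
    ∃ ρ > (0:ℝ), ∀ (u₀ : ESp N) (v : ℝ → HSp) (u : ℝ → ESp N),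
      ‖u₀‖ ≤ R₁ → IsControl T v → ∫ t in (0:ℝ)..T, ‖v t‖ ^ 2 ≤ R₂ ^ 2 →
      IsSolution S v u₀ u → ∀ t ∈ Icc 0 T, ‖u t‖ ≤ ρ := by
  obtain ⟨C, hC, hgrow⟩ := S.hσ_growth
  set c := 2 * |S.γ| + 1 + 2 * C
  set M := c * T + (∫ s in (0:ℝ)..T, ‖S.g s‖ ^ 2) + 2 * C * R₂ ^ 2
  refine ⟨√(2 ^ ⌈2 * M⌉₊ * (1 + R₁ ^ 2)), by positivity, ?_⟩
  intro u₀ v u hu₀ hv hvR hsol t ht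
  have h0 : (0:ℝ) ∈ Icc 0 T := ⟨le_rfl, S.hT.le⟩
  have hTT : T ∈ Icc 0 T := ⟨S.hT.le, le_rfl⟩
  have heq := hsol.eq_add_integral
  set α : ℝ → ℝ := fun s => c + ‖S.g s‖ ^ 2 + 2 * C * ‖v s‖ ^ 2
  have hα : IntegrableOn α (Icc 0 T) :=
    ((integrableOn_const measure_Icc_lt_top.ne).add S.hg_int).add (hv.2.const_mul _)
  have hα0 : ∀ s ∈ Icc 0 T, 0 ≤ α s := fun s _ => by positivity
  have hαM : ∫ s in (0:ℝ)..T, α s ≤ M := by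
    simp only [α]
    rw [intervalIntegral.integral_add (intervalIntegrable_const.add
      (S.hg_int.intervalIntegrable_of_mem_Icc h0 hTT))
      ((hv.2.intervalIntegrable_of_mem_Icc h0 hTT).const_mul _),
      intervalIntegral.integral_add intervalIntegrable_const
      (S.hg_int.intervalIntegrable_of_mem_Icc h0 hTT), intervalIntegral.integral_const_mul,
      intervalIntegral.integral_const, smul_eq_mul, sub_zero]
    nlinarith
  have hφ : ContinuousOn (fun s => 1 + ‖u s‖ ^ 2) (Icc 0 T) :=
    continuousOn_const.add (hsol.1.norm.pow 2)
  have hF := S.integrableOn_rhs hsol.1 hv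
  have hgronwall : ∀ t ∈ Icc 0 T,
      1 + ‖u t‖ ^ 2 ≤ (1 + R₁ ^ 2) + ∫ s in (0:ℝ)..t, α s * (1 + ‖u s‖ ^ 2) := by
    intro t ht
    have henergy := sq_norm_le_add_integral_inner hsol.1 hF heq t ht
    have hFu := hF.inner_continuousOn hsol.1 isCompact_Icc
    have hinner : 2 * ∫ s in (0:ℝ)..t, ⟪S.rhs s (u s) (v s), u s⟫ ≤
        ∫ s in (0:ℝ)..t, α s * (1 + ‖u s‖ ^ 2) := by
      rw [← intervalIntegral.integral_const_mul]
      refine integral_mono_on ht.1 ((hFu.intervalIntegrable_of_mem_Icc h0 ht).const_mul 2)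
        ((hα.mul_continuousOn hφ isCompact_Icc).intervalIntegrable_of_mem_Icc h0 ht)
        fun s hs => S.two_inner_rhs_le hC.le (hgrow s ⟨hs.1, hs.2.trans ht.2⟩ _)
    rw [hsol.apply_zero] at henergy
    nlinarith [pow_le_pow_left₀ (norm_nonneg _) hu₀ 2]
  have hbound := le_two_pow_mul_of_le_add_integral_mul hα hα0 hφ (fun _ _ => by positivity)
    hgronwall hαM t ht
  exact (le_abs_self _).trans (Real.abs_le_sqrt (by linarith))

theorem exists_norm_sub_le_of_isSolution (R₁ R₂ : ℝ) :
    ∃ K > (0:ℝ), ∀ (u₀₁ u₀₂ : ESp N) (v₁ v₂ : ℝ → HSp) (u₁ u₂ : ℝ → ESp N),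
      ‖u₀₁‖ ≤ R₁ → ‖u₀₂‖ ≤ R₁ → IsControl T v₁ → IsControl T v₂ →
      ∫ t in (0:ℝ)..T, ‖v₁ t‖ ^ 2 ≤ R₂ ^ 2 → ∫ t in (0:ℝ)..T, ‖v₂ t‖ ^ 2 ≤ R₂ ^ 2 →
      IsSolution S v₁ u₀₁ u₁ → IsSolution S v₂ u₀₂ u₂ →
      ∀ t ∈ Icc 0 T, ‖u₁ t - u₂ t‖ ≤ K * (‖u₀₁ - u₀₂‖ + ∫ s in (0:ℝ)..T, ‖v₁ s - v₂ s‖) := by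
  obtain ⟨ρ, hρ, hbound⟩ := S.exists_norm_le_of_isSolution R₁ R₂
  obtain ⟨Lf, hLf, hflip⟩ := S.hf_lip ρ hρ
  obtain ⟨Lσ, hLσ, hσlip⟩ := S.hσ_lip ρ hρ
  obtain ⟨C, hC, hgrow⟩ := S.hσ_growth
  set c := S.ν * ‖S.A‖ + |S.γ| + Lf
  have hc : 0 ≤ c := by have := S.hν.le; positivity
  set J := ⌈2 * (c * T + Lσ * (T + R₂ ^ 2))⌉₊
  refine ⟨2 ^ J * (1 + C * (1 + ρ)), by positivity, ?_⟩
  intro u₀₁ u₀₂ v₁ v₂ u₁ u₂ hu₀₁ hu₀₂ hv₁ hv₂ hv₁R hv₂R hsol₁ hsol₂ t ht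
  have h0 : (0:ℝ) ∈ Icc 0 T := ⟨le_rfl, S.hT.le⟩
  have hTT : T ∈ Icc 0 T := ⟨S.hT.le, le_rfl⟩
  have hρ₁ := hbound _ _ _ hu₀₁ hv₁ hv₁R hsol₁
  have hρ₂ := hbound _ _ _ hu₀₂ hv₂ hv₂R hsol₂
  have hu0 : u₁ 0 - u₂ 0 = u₀₁ - u₀₂ := by
    rw [hsol₁.apply_zero, hsol₂.apply_zero]
  have heq : ∀ t ∈ Icc 0 T, u₁ t - u₂ t = (u₁ 0 - u₂ 0) +
      ∫ s in (0:ℝ)..t, (S.rhs s (u₁ s) (v₁ s) - S.rhs s (u₂ s) (v₂ s)) := fun t ht => by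
    rw [hsol₁.eq_add_integral t ht, hsol₂.eq_add_integral t ht,
      intervalIntegral.integral_sub
        ((S.integrableOn_rhs hsol₁.1 hv₁).intervalIntegrable_of_mem_Icc h0 ht)
        ((S.integrableOn_rhs hsol₂.1 hv₂).intervalIntegrable_of_mem_Icc h0 ht)]
    abel
  have hdv := (hv₁.sub hv₂).integrableOn.norm
  have hM : ∫ s in (0:ℝ)..T, (c + Lσ * ‖v₁ s‖) ≤ c * T + Lσ * (T + R₂ ^ 2) := by
    rw [intervalIntegral.integral_add intervalIntegrable_const
      ((IntegrableOn.intervalIntegrable_of_mem_Icc hv₁.integrableOn.norm h0 hTT).const_mul _),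
      intervalIntegral.integral_const_mul, intervalIntegral.integral_const, smul_eq_mul, sub_zero]
    nlinarith [hv₁.integral_norm_le S.hT.le]
  have hgronwall := norm_le_two_pow_mul_of_norm_integrand_le
    (w := fun t => u₁ t - u₂ t) (hsol₁.1.sub hsol₂.1) heq
    ((integrableOn_const measure_Icc_lt_top.ne).add (hv₁.integrableOn.norm.const_mul Lσ))
    (fun s _ => add_nonneg hc (mul_nonneg hLσ.le (norm_nonneg _)))
    (hdv.const_mul (C * (1 + ρ))) (fun s _ => by positivity)
    (fun s hs => S.norm_rhs_sub_rhs_le (hflip _ _ (hρ₁ s hs) (hρ₂ s hs))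
      (hσlip s hs _ _ (hρ₁ s hs) (hρ₂ s hs)) ((hgrow s hs _).trans (by gcongr; exact hρ₂ s hs)))
    hM t ht
  rw [hu0, intervalIntegral.integral_const_mul] at hgronwall
  have hI : 0 ≤ ∫ s in (0:ℝ)..T, ‖v₁ s - v₂ s‖ := integral_nonneg S.hT.le fun _ _ => norm_nonneg _
  have hfactor : ‖u₀₁ - u₀₂‖ + C * (1 + ρ) * ∫ s in (0:ℝ)..T, ‖v₁ s - v₂ s‖ ≤
      (1 + C * (1 + ρ)) * (‖u₀₁ - u₀₂‖ + ∫ s in (0:ℝ)..T, ‖v₁ s - v₂ s‖) := by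
    nlinarith [norm_nonneg (u₀₁ - u₀₂), mul_nonneg hC.le hρ.le]
  rw [mul_assoc]
  exact hgronwall.trans (mul_le_mul_of_nonneg_left hfactor (by positivity))

end ControlledSetting

/-- For each `R₁, R₂ > 0` there exists `C₁ = C₁(R₁,R₂,T) > 0` such that
for any initial data with norms `≤ R₁` and controls with `L²(0,T;H)`-norms `≤ R₂`,
the corresponding solutions satisfy
`‖u_{v₁} - u_{v₂}‖²_{C([0,T],ℓ²)} ≤ C₁(‖u_{0,1} - u_{0,2}‖² + ‖v₁ - v₂‖²_{L²(0,T;H)})`. -/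
theorem stmt10 (N : ℕ) (T : ℝ) (S : ControlledSetting N T) :
    ∀ R₁ > (0:ℝ), ∀ R₂ > (0:ℝ), ∃ C₁ > (0:ℝ),
      ∀ (u₀₁ u₀₂ : ESp N) (v₁ v₂ : ℝ → HSp) (u₁ u₂ : ℝ → ESp N),
        ‖u₀₁‖ ≤ R₁ → ‖u₀₂‖ ≤ R₁ →
        IsControl T v₁ → IsControl T v₂ →
        (∫ t in (0:ℝ)..T, ‖v₁ t‖ ^ 2) ≤ R₂ ^ 2 →
        (∫ t in (0:ℝ)..T, ‖v₂ t‖ ^ 2) ≤ R₂ ^ 2 →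
        IsSolution S v₁ u₀₁ u₁ → IsSolution S v₂ u₀₂ u₂ →
        ∀ t ∈ Icc (0:ℝ) T,
          ‖u₁ t - u₂ t‖ ^ 2 ≤
            C₁ * (‖u₀₁ - u₀₂‖ ^ 2 + ∫ t in (0:ℝ)..T, ‖v₁ t - v₂ t‖ ^ 2) := by
  intro R₁ _ R₂ _
  obtain ⟨K, hK, hdiff⟩ := S.exists_norm_sub_le_of_isSolution R₁ R₂
  refine ⟨2 * K ^ 2 * (1 + T), by have := S.hT; positivity, ?_⟩
  intro u₀₁ u₀₂ v₁ v₂ u₁ u₂ hu₀₁ hu₀₂ hv₁ hv₂ hv₁R hv₂R hsol₁ hsol₂ t ht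
  have hΔu := hdiff u₀₁ u₀₂ v₁ v₂ u₁ u₂ hu₀₁ hu₀₂ hv₁ hv₂ hv₁R hv₂R hsol₁ hsol₂ t ht
  have hΔv := hv₁.sub hv₂
  have h0 : (0:ℝ) ∈ Icc 0 T := ⟨le_rfl, S.hT.le⟩
  have hTT : T ∈ Icc 0 T := ⟨S.hT.le, le_rfl⟩
  have hCS := sq_intervalIntegral_le_mul_intervalIntegral_sq S.hT.le
    (IntegrableOn.intervalIntegrable_of_mem_Icc hΔv.integrableOn.norm h0 hTT)
    (hΔv.2.intervalIntegrable_of_mem_Icc h0 hTT)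
  rw [sub_zero] at hCS
  set d := ‖u₀₁ - u₀₂‖
  set I := ∫ s in (0:ℝ)..T, ‖v₁ s - v₂ s‖
  set V := ∫ s in (0:ℝ)..T, ‖v₁ s - v₂ s‖ ^ 2
  have hV : 0 ≤ V := integral_nonneg S.hT.le fun _ _ => by positivity
  calc ‖u₁ t - u₂ t‖ ^ 2 ≤ (K * (d + I)) ^ 2 := pow_le_pow_left₀ (norm_nonneg _) hΔu 2
    _ ≤ 2 * K ^ 2 * (d ^ 2 + I ^ 2) := by nlinarith [sq_nonneg (d - I)]
    _ ≤ 2 * K ^ 2 * (1 + T) * (d ^ 2 + V) := by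
      have := S.hT
      have : d ^ 2 + I ^ 2 ≤ (1 + T) * (d ^ 2 + V) := by nlinarith [sq_nonneg d]
      nlinarith [sq_nonneg K]
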